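/- arXiv:2104.10767 — 6 statements merged into one kernel-verified Lean document; each statement's English description precedes it below -/
import Mathlib

section
/- With the single-parameter, N=1 setup (O₁ = CΦ(μ₀), O₂ = CΦ(μ₀)A₁Φ(μ₁); R₁ = Φ(λ₀)B, R₂ = Φ(λ₁)A₁Φ(λ₀)B), the (2,1) entry of Ê := O·R equals -(H₁(μ₁,μ₀) - H₁(λ₀,μ₀))/(μ₁ - λ₀), where H₁(s₁,s₀) := CΦ(s₁)A₁Φ(s₀)B. -/
open Matrix

/-- The resolvent `Φ(z) = (zI - A₀)⁻¹`. -/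
noncomputable def Phi {n : ℕ} (A₀ : Matrix (Fin n) (Fin n) ℂ) (z : ℂ) :
    Matrix (Fin n) (Fin n) ℂ :=
  (z • (1 : Matrix (Fin n) (Fin n) ℂ) - A₀)⁻¹

lemma resolvent_id {n : ℕ} (A₀ : Matrix (Fin n) (Fin n) ℂ) (a b : ℂ)
    (ha : IsUnit (a • (1 : Matrix (Fin n) (Fin n) ℂ) - A₀))
    (hb : IsUnit (b • (1 : Matrix (Fin n) (Fin n) ℂ) - A₀)) :
    Phi A₀ a - Phi A₀ b = (b - a) • (Phi A₀ a * Phi A₀ b) := by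
  set X := a • (1 : Matrix (Fin n) (Fin n) ℂ) - A₀
  set Y := b • (1 : Matrix (Fin n) (Fin n) ℂ) - A₀
  have hXd : IsUnit X.det := (Matrix.isUnit_iff_isUnit_det _).mp ha
  have hYd : IsUnit Y.det := (Matrix.isUnit_iff_isUnit_det _).mp hb
  have key : X⁻¹ * (Y - X) * Y⁻¹ = X⁻¹ - Y⁻¹ := by
    rw [mul_sub, sub_mul, Matrix.mul_assoc, Matrix.mul_nonsing_inv Y hYd,
      Matrix.mul_one, Matrix.nonsing_inv_mul X hXd, Matrix.one_mul]
  have hYX : Y - X = (b - a) • (1 : Matrix (Fin n) (Fin n) ℂ) := by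
    simp [X, Y, sub_smul]
  calc Phi A₀ a - Phi A₀ b = X⁻¹ - Y⁻¹ := rfl
    _ = X⁻¹ * (Y - X) * Y⁻¹ := key.symm
    _ = (b - a) • (X⁻¹ * Y⁻¹) := by
        rw [hYX]
        simp [Matrix.mul_smul, Matrix.smul_mul]

theorem stmt_4 {n : ℕ} (A₀ A₁ : Matrix (Fin n) (Fin n) ℂ)
    (C : Matrix (Fin 1) (Fin n) ℂ) (B : Matrix (Fin n) (Fin 1) ℂ)
    (μ₀ μ₁ l₀ l₁ : ℂ)
    (hμ₀ : IsUnit (μ₀ • (1 : Matrix (Fin n) (Fin n) ℂ) - A₀))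
    (hμ₁ : IsUnit (μ₁ • (1 : Matrix (Fin n) (Fin n) ℂ) - A₀))
    (hl₀ : IsUnit (l₀ • (1 : Matrix (Fin n) (Fin n) ℂ) - A₀))
    (hl₁ : IsUnit (l₁ • (1 : Matrix (Fin n) (Fin n) ℂ) - A₀))
    (O : Matrix (Fin 2) (Fin n) ℂ) (R : Matrix (Fin n) (Fin 2) ℂ)
    (hO0 : ∀ j, O 0 j = (C * Phi A₀ μ₀) 0 j)
    (hO1 : ∀ j, O 1 j = (C * Phi A₀ μ₀ * A₁ * Phi A₀ μ₁) 0 j)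
    (hR0 : ∀ i, R i 0 = (Phi A₀ l₀ * B) i 0)
    (hR1 : ∀ i, R i 1 = (Phi A₀ l₁ * A₁ * Phi A₀ l₀ * B) i 0)
    (hne : μ₁ ≠ l₀) :
    (O * R) 1 0 =
      -(((C * Phi A₀ μ₀ * A₁ * Phi A₀ μ₁ * B) 0 0 -
          (C * Phi A₀ μ₀ * A₁ * Phi A₀ l₀ * B) 0 0) / (μ₁ - l₀)) := by
  have h1 : (O * R) 1 0
      = (C * Phi A₀ μ₀ * A₁ * Phi A₀ μ₁ * (Phi A₀ l₀ * B)) 0 0 := by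
    rw [Matrix.mul_apply, Matrix.mul_apply]
    exact Finset.sum_congr rfl fun j _ => by rw [hO1 j, hR0 j]
  have hres := resolvent_id A₀ μ₁ l₀ hμ₁ hl₀
  have hne' : l₀ - μ₁ ≠ 0 := sub_ne_zero.mpr (Ne.symm hne)
  have h3 : Phi A₀ μ₁ * Phi A₀ l₀ = (l₀ - μ₁)⁻¹ • (Phi A₀ μ₁ - Phi A₀ l₀) := by
    rw [hres, smul_smul, inv_mul_cancel₀ hne', one_smul]
  rw [h1, ← Matrix.mul_assoc, Matrix.mul_assoc (C * Phi A₀ μ₀ * A₁), h3]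
  rw [Matrix.mul_smul, Matrix.smul_mul, Matrix.smul_apply, Matrix.mul_sub,
    Matrix.sub_mul, Matrix.sub_apply, smul_eq_mul]
  field_simp [hne', sub_ne_zero.mpr hne]
  ring
end

section
/- With the single-parameter, N=1 setup, the (1,1) entry of Â₀ := O·A₀·R equals -(μ₀·H₀(μ₀) - λ₀·H₀(λ₀))/(μ₀ - λ₀), where H₀(s) := CΦ(s)B and O, R are the generalized observability/controllability matrices with rows CΦ(μ₀), CΦ(μ₀)A₁Φ(μ₁) and columns Φ(λ₀)B, Φ(λ₁)A₁Φ(λ₀)B. -/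
/-!
Only the first row of `O` and the first column of `R` enter the `(0,0)` entry, so it equals
`C Φ(μ₀) A₀ Φ(λ₀) B`. Writing `(μ - λ) A₀ = λ (μ I - A₀) - μ (λ I - A₀)` and multiplying by
`Φ(μ)` on the left and `Φ(λ)` on the right gives `(μ - λ) Φ(μ) A₀ Φ(λ) = λ Φ(λ) - μ Φ(μ)`.
-/

open Matrix

namespace Matrix

variable {ι K : Type*} [Fintype ι] [DecidableEq ι] [CommRing K]

theorem smul_inv_mul_mul_inv_sub_smul_one (A : Matrix ι ι K) {z w : K}
    (hz : IsUnit (z • (1 : Matrix ι ι K) - A)) (hw : IsUnit (w • (1 : Matrix ι ι K) - A)) :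
    (z - w) • ((z • 1 - A)⁻¹ * A * (w • 1 - A)⁻¹) =
      w • (w • 1 - A)⁻¹ - z • (z • 1 - A)⁻¹ := by
  have hA : (z - w) • A = w • (z • 1 - A) - z • (w • 1 - A) := by module
  calc (z - w) • ((z • 1 - A)⁻¹ * A * (w • 1 - A)⁻¹)
      = (z • 1 - A)⁻¹ * ((z - w) • A) * (w • 1 - A)⁻¹ := by
        rw [Matrix.mul_smul, Matrix.smul_mul]
    _ = w • (w • 1 - A)⁻¹ - z • (z • 1 - A)⁻¹ := by
        rw [hA, Matrix.mul_sub, Matrix.sub_mul, Matrix.mul_smul, Matrix.mul_smul,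
          Matrix.smul_mul, Matrix.smul_mul, nonsing_inv_mul _ ((isUnit_iff_isUnit_det _).mp hz),
          Matrix.mul_assoc, mul_nonsing_inv _ ((isUnit_iff_isUnit_det _).mp hw),
          Matrix.one_mul, Matrix.mul_one]

theorem mul_mul_apply_congr {m m' n p q q' : Type*} [Fintype n] [Fintype p]
    {O : Matrix m n K} {X : Matrix m' n K} {M : Matrix n p K} {R : Matrix p q K}
    {Y : Matrix p q' K} {i : m} {i' : m'} {j : q} {j' : q'}
    (hO : ∀ k, O i k = X i' k) (hR : ∀ k, R k j = Y k j') :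
    (O * M * R) i j = (X * M * Y) i' j' := by
  simp only [mul_apply, hO, hR]

end Matrix

theorem stmt_5_general {n : ℕ} (A₀ : Matrix (Fin n) (Fin n) ℂ)
    (C : Matrix (Fin 1) (Fin n) ℂ) (B : Matrix (Fin n) (Fin 1) ℂ)
    (μ₀ l₀ : ℂ)
    (hμ₀ : IsUnit (μ₀ • (1 : Matrix (Fin n) (Fin n) ℂ) - A₀))
    (hl₀ : IsUnit (l₀ • (1 : Matrix (Fin n) (Fin n) ℂ) - A₀))
    (O : Matrix (Fin 2) (Fin n) ℂ) (R : Matrix (Fin n) (Fin 2) ℂ)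
    (hO0 : ∀ j, O 0 j = (C * Phi A₀ μ₀) 0 j)
    (hR0 : ∀ i, R i 0 = (Phi A₀ l₀ * B) i 0)
    (hne : μ₀ ≠ l₀) :
    (O * A₀ * R) 0 0 =
      -((μ₀ * (C * Phi A₀ μ₀ * B) 0 0 - l₀ * (C * Phi A₀ l₀ * B) 0 0) /
        (μ₀ - l₀)) := by
  have key := congrArg (fun M => (C * M * B) 0 0)
    (smul_inv_mul_mul_inv_sub_smul_one A₀ hμ₀ hl₀)
  simp only [Matrix.mul_smul, Matrix.smul_mul, Matrix.mul_sub, Matrix.sub_mul, Matrix.sub_apply,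
    Matrix.smul_apply, smul_eq_mul, Matrix.mul_assoc] at key
  rw [mul_mul_apply_congr hO0 hR0, ← neg_div, neg_sub, eq_div_iff (sub_ne_zero.mpr hne)]
  simp only [Phi, Matrix.mul_assoc]
  linear_combination key

theorem stmt_5 {n : ℕ} (A₀ A₁ : Matrix (Fin n) (Fin n) ℂ)
    (C : Matrix (Fin 1) (Fin n) ℂ) (B : Matrix (Fin n) (Fin 1) ℂ)
    (μ₀ μ₁ l₀ l₁ : ℂ)
    (hμ₀ : IsUnit (μ₀ • (1 : Matrix (Fin n) (Fin n) ℂ) - A₀))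
    (hμ₁ : IsUnit (μ₁ • (1 : Matrix (Fin n) (Fin n) ℂ) - A₀))
    (hl₀ : IsUnit (l₀ • (1 : Matrix (Fin n) (Fin n) ℂ) - A₀))
    (hl₁ : IsUnit (l₁ • (1 : Matrix (Fin n) (Fin n) ℂ) - A₀))
    (O : Matrix (Fin 2) (Fin n) ℂ) (R : Matrix (Fin n) (Fin 2) ℂ)
    (hO0 : ∀ j, O 0 j = (C * Phi A₀ μ₀) 0 j)
    (hO1 : ∀ j, O 1 j = (C * Phi A₀ μ₀ * A₁ * Phi A₀ μ₁) 0 j)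
    (hR0 : ∀ i, R i 0 = (Phi A₀ l₀ * B) i 0)
    (hR1 : ∀ i, R i 1 = (Phi A₀ l₁ * A₁ * Phi A₀ l₀ * B) i 0)
    (hne : μ₀ ≠ l₀) :
    (O * A₀ * R) 0 0 =
      -((μ₀ * (C * Phi A₀ μ₀ * B) 0 0 - l₀ * (C * Phi A₀ l₀ * B) 0 0) /
        (μ₀ - l₀)) :=
  stmt_5_general A₀ C B μ₀ l₀ hμ₀ hl₀ O R hO0 hR0 hne
end

section
/- Let O be the generalized observability matrix with rows O_{k+1} = CΦ(μ₀)A_{q^l_1}Φ(μ₁)⋯A_{q^l_k}Φ(μ_k) and R the generalized controllability matrix with columns R_{ℓ+1} = Φ(λ_ℓ)A_{q^r_ℓ}⋯A_{q^r_1}Φ(λ₀)B. Then for all 0 ≤ k, ℓ ≤ N with μ_k ≠ λ_ℓ, the (k+1, ℓ+1) entry of Ê := O·R equals -(α_{k,ℓ} - β_{k,ℓ})/(μ_k - λ_ℓ), where α_{k,ℓ} := O_k A_{q^l_k} Φ(μ_k) A_{q^r_ℓ} R_ℓ and β_{k,ℓ} := O_k A_{q^l_k} Φ(λ_ℓ)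 A_{q^r_ℓ} R_ℓ (with the convention O₀ A_{q^l₀} = C and A_{q^r₀} R₀ = B). -/
open Matrix

/-- `loewnerOA A C μ ql k = C Φ(μ₀) A_{ql 1} Φ(μ₁) ⋯ Φ(μ_{k-1}) A_{ql k}`, so that the
`(k+1)`-st row of the generalized observability matrix is `loewnerOA … k * Φ(μ_k)`,
matching the recursion `O_{k+1} = O_k A_{q^l_k} Φ(μ_k)` with `O₁ = C Φ(μ₀)`. -/
noncomputable def loewnerOA {n np : ℕ} (A : Fin (np + 1) → Matrix (Fin n) (Fin n) ℂ)
    (C : Matrix (Fin 1) (Fin n) ℂ) (μ : ℕ → ℂ) (ql : ℕ → Fin np) :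
    ℕ → Matrix (Fin 1) (Fin n) ℂ
  | 0 => C
  | k + 1 => loewnerOA A C μ ql k * Phi (A 0) (μ k) * A (ql (k + 1)).succ

/-- `loewnerAR A B lam qr ℓ = A_{qr ℓ} Φ(λ_{ℓ-1}) ⋯ A_{qr 1} Φ(λ₀) B`, so that the
`(ℓ+1)`-st column of the generalized controllability matrix is `Φ(λ_ℓ) * loewnerAR … ℓ`,
matching the recursion `R_{ℓ+1} = Φ(λ_ℓ) A_{q^r_ℓ} R_ℓ` with `R₁ = Φ(λ₀) B`. -/
noncomputable def loewnerAR {n np : ℕ} (A : Fin (np + 1) → Matrix (Fin n) (Fin n) ℂ)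
    (B : Matrix (Fin n) (Fin 1) ℂ) (lam : ℕ → ℂ) (qr : ℕ → Fin np) :
    ℕ → Matrix (Fin n) (Fin 1) ℂ
  | 0 => B
  | l + 1 => A (qr (l + 1)).succ * Phi (A 0) (lam l) * loewnerAR A B lam qr l

theorem stmt_8 {n np N : ℕ} (A : Fin (np + 1) → Matrix (Fin n) (Fin n) ℂ)
    (C : Matrix (Fin 1) (Fin n) ℂ) (B : Matrix (Fin n) (Fin 1) ℂ)
    (μ lam : ℕ → ℂ) (ql qr : ℕ → Fin np)
    (hμ : ∀ k ≤ N, IsUnit (μ k • (1 : Matrix (Fin n) (Fin n) ℂ) - A 0))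
    (hlam : ∀ l ≤ N, IsUnit (lam l • (1 : Matrix (Fin n) (Fin n) ℂ) - A 0))
    (O : Matrix (Fin (N + 1)) (Fin n) ℂ) (R : Matrix (Fin n) (Fin (N + 1)) ℂ)
    (hO : ∀ (k : Fin (N + 1)) (j : Fin n),
      O k j = (loewnerOA A C μ ql k * Phi (A 0) (μ k)) 0 j)
    (hR : ∀ (j : Fin n) (l : Fin (N + 1)),
      R j l = (Phi (A 0) (lam l) * loewnerAR A B lam qr l) j 0)
    :
    ∀ (k l : Fin (N + 1)), μ k ≠ lam l →
      (O * R) k l =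
        -(((loewnerOA A C μ ql k * Phi (A 0) (μ k) * loewnerAR A B lam qr l) 0 0 -
           (loewnerOA A C μ ql k * Phi (A 0) (lam l) * loewnerAR A B lam qr l) 0 0) /
          (μ k - lam l)) := by
  intro k l hne
  set X := μ (k : ℕ) • (1 : Matrix (Fin n) (Fin n) ℂ) - A 0 with hXdef
  set Y := lam (l : ℕ) • (1 : Matrix (Fin n) (Fin n) ℂ) - A 0 with hYdef
  have hXu : IsUnit X := hμ k (Nat.lt_succ_iff.mp k.isLt)
  have hYu : IsUnit Y := hlam l (Nat.lt_succ_iff.mp l.isLt)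
  have hXd : IsUnit X.det := (Matrix.isUnit_iff_isUnit_det X).mp hXu
  have hYd : IsUnit Y.det := (Matrix.isUnit_iff_isUnit_det Y).mp hYu
  -- resolvent identity
  have hres : Phi (A 0) (μ (k : ℕ)) * Phi (A 0) (lam (l : ℕ)) =
      (lam (l : ℕ) - μ (k : ℕ))⁻¹ •
        (Phi (A 0) (μ (k : ℕ)) - Phi (A 0) (lam (l : ℕ))) := by
    have hPhiX : Phi (A 0) (μ (k : ℕ)) = X⁻¹ := rfl
    have hPhiY : Phi (A 0) (lam (l : ℕ)) = Y⁻¹ := rfl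
    have key : X⁻¹ - Y⁻¹ = (lam (l : ℕ) - μ (k : ℕ)) • (X⁻¹ * Y⁻¹) := by
      have h1 : X⁻¹ - Y⁻¹ = X⁻¹ * (Y - X) * Y⁻¹ := by
        rw [Matrix.mul_sub, Matrix.sub_mul, Matrix.mul_assoc,
          Matrix.mul_nonsing_inv Y hYd, Matrix.nonsing_inv_mul X hXd,
          Matrix.mul_one, Matrix.one_mul]
      have h2 : Y - X = (lam (l : ℕ) - μ (k : ℕ)) • (1 : Matrix (Fin n) (Fin n) ℂ) := by
        rw [hXdef, hYdef, sub_smul]; abel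
      rw [h1, h2]
      rw [Matrix.mul_smul, Matrix.mul_one, Matrix.smul_mul]
    rw [hPhiX, hPhiY, key, smul_smul, inv_mul_cancel₀ (sub_ne_zero.mpr (Ne.symm hne)),
      one_smul]
  have hentry : (O * R) k l =
      (loewnerOA A C μ ql k *
        (Phi (A 0) (μ (k : ℕ)) * Phi (A 0) (lam (l : ℕ))) * loewnerAR A B lam qr l) 0 0 := by
    have : loewnerOA A C μ ql k *
        (Phi (A 0) (μ (k : ℕ)) * Phi (A 0) (lam (l : ℕ))) * loewnerAR A B lam qr l =
        (loewnerOA A C μ ql k * Phi (A 0) (μ (k : ℕ))) *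
          (Phi (A 0) (lam (l : ℕ)) * loewnerAR A B lam qr l) := by
      simp only [Matrix.mul_assoc]
    rw [this, Matrix.mul_apply, Matrix.mul_apply]
    exact Finset.sum_congr rfl fun j _ => by rw [hO k j, hR j l]
  rw [hentry, hres]
  rw [Matrix.mul_smul, Matrix.smul_mul, Matrix.smul_apply, Matrix.mul_sub,
    Matrix.sub_mul, Matrix.sub_apply]
  rw [div_eq_inv_mul, ← neg_mul, smul_eq_mul]
  congr 1
  rw [← neg_sub (μ (k:ℕ)), neg_inv]
end

section
/- With the general Loewner-LPV setup, for all 0 ≤ k, ℓ ≤ N with μ_k ≠ λ_ℓ, the (k+1, ℓ+1) entry of Â₀ := O·A₀·R equals -(μ_k·α_{k,ℓ} - λ_ℓ·β_{k,ℓ})/(μ_k - λ_ℓ), with α_{k,ℓ} = O_k A_{q^l_k} Φ(μ_k) A_{q^r_ℓ} R_ℓ and β_{k,ℓ} = O_k A_{q^l_k} Φ(λ_ℓ) A_{q^r_ℓ} R_ℓ. -/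
/-!
Since `Φ(a) (a I - A₀) = I`, we have `Φ(a) A₀ = a Φ(a) - I`; combined with the resolvent identity
`Φ(b) - Φ(a) = (a - b) Φ(a) Φ(b)` this gives
`Φ(a) A₀ Φ(b) = (b Φ(b) - a Φ(a)) / (a - b)` for `a ≠ b`.
The `(k, ℓ)` entry of `O A₀ R` is `O_k A_{q^l_k} Φ(μ_k) A₀ Φ(λ_ℓ) A_{q^r_ℓ} R_ℓ`, and substituting the
identity with `a = μ_k`, `b = λ_ℓ` yields the claimed formula.
-/

open Matrix

section Resolvent

variable {n : ℕ} {M : Matrix (Fin n) (Fin n) ℂ} {a b : ℂ}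

lemma Phi_mul_sub_smul_one (ha : IsUnit (a • (1 : Matrix (Fin n) (Fin n) ℂ) - M)) :
    Phi M a * (a • 1 - M) = 1 :=
  nonsing_inv_mul _ ((isUnit_iff_isUnit_det _).mp ha)

lemma sub_smul_one_mul_Phi (ha : IsUnit (a • (1 : Matrix (Fin n) (Fin n) ℂ) - M)) :
    (a • 1 - M) * Phi M a = 1 :=
  mul_nonsing_inv _ ((isUnit_iff_isUnit_det _).mp ha)

lemma Phi_mul_self (ha : IsUnit (a • (1 : Matrix (Fin n) (Fin n) ℂ) - M)) :
    Phi M a * M = a • Phi M a - 1 := by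
  have h := Phi_mul_sub_smul_one ha
  rw [Matrix.mul_sub, Matrix.mul_smul, mul_one] at h
  linear_combination (norm := module) -h

lemma Phi_sub_Phi (ha : IsUnit (a • (1 : Matrix (Fin n) (Fin n) ℂ) - M))
    (hb : IsUnit (b • (1 : Matrix (Fin n) (Fin n) ℂ) - M)) :
    Phi M b - Phi M a = (a - b) • (Phi M a * Phi M b) :=
  calc Phi M b - Phi M a
      = Phi M a * (((a • 1 - M) - (b • 1 - M)) * Phi M b) := by
        rw [Matrix.sub_mul, Matrix.mul_sub, ← mul_assoc, Phi_mul_sub_smul_one ha,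
          sub_smul_one_mul_Phi hb, one_mul, mul_one]
    _ = (a - b) • (Phi M a * Phi M b) := by
        rw [sub_sub_sub_cancel_right, ← sub_smul, Matrix.smul_mul, Matrix.mul_smul, one_mul]

lemma sub_smul_Phi_mul_mul_Phi (ha : IsUnit (a • (1 : Matrix (Fin n) (Fin n) ℂ) - M))
    (hb : IsUnit (b • (1 : Matrix (Fin n) (Fin n) ℂ) - M)) :
    (a - b) • (Phi M a * M * Phi M b) = b • Phi M b - a • Phi M a := by
  rw [Phi_mul_self ha, Matrix.sub_mul, one_mul, Matrix.smul_mul]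
  linear_combination (norm := module) (-a) • Phi_sub_Phi ha hb

lemma Phi_mul_mul_Phi (ha : IsUnit (a • (1 : Matrix (Fin n) (Fin n) ℂ) - M))
    (hb : IsUnit (b • (1 : Matrix (Fin n) (Fin n) ℂ) - M)) (hab : a ≠ b) :
    Phi M a * M * Phi M b = (a - b)⁻¹ • (b • Phi M b - a • Phi M a) := by
  rw [← sub_smul_Phi_mul_mul_Phi ha hb, smul_smul, inv_mul_cancel₀ (sub_ne_zero.mpr hab),
    one_smul]

end Resolvent

lemma Matrix.mul_mul_apply_of_rows_of_cols {α m n p : Type*} [Fintype n] [NonUnitalNonAssocSemiring α]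
    {O : Matrix m n α} {R : Matrix n p α} {x : m → Matrix (Fin 1) n α}
    {y : p → Matrix n (Fin 1) α} (hO : ∀ k j, O k j = x k 0 j) (hR : ∀ j l, R j l = y l j 0)
    (M : Matrix n n α) (k : m) (l : p) :
    (O * M * R) k l = (x k * M * y l) 0 0 := by
  simp only [mul_apply, hO, hR]

theorem stmt_9 {n np N : ℕ} (A : Fin (np + 1) → Matrix (Fin n) (Fin n) ℂ)
    (C : Matrix (Fin 1) (Fin n) ℂ) (B : Matrix (Fin n) (Fin 1) ℂ)
    (μ lam : ℕ → ℂ) (ql qr : ℕ → Fin np)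
    (hμ : ∀ k ≤ N, IsUnit (μ k • (1 : Matrix (Fin n) (Fin n) ℂ) - A 0))
    (hlam : ∀ l ≤ N, IsUnit (lam l • (1 : Matrix (Fin n) (Fin n) ℂ) - A 0))
    (O : Matrix (Fin (N + 1)) (Fin n) ℂ) (R : Matrix (Fin n) (Fin (N + 1)) ℂ)
    (hO : ∀ (k : Fin (N + 1)) (j : Fin n),
      O k j = (loewnerOA A C μ ql k * Phi (A 0) (μ k)) 0 j)
    (hR : ∀ (j : Fin n) (l : Fin (N + 1)),
      R j l = (Phi (A 0) (lam l) * loewnerAR A B lam qr l) j 0)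
    :
    ∀ (k l : Fin (N + 1)), μ k ≠ lam l →
      (O * A 0 * R) k l =
        -((μ k * (loewnerOA A C μ ql k * Phi (A 0) (μ k) * loewnerAR A B lam qr l) 0 0 -
           lam l * (loewnerOA A C μ ql k * Phi (A 0) (lam l) * loewnerAR A B lam qr l) 0 0) /
          (μ k - lam l)) := by
  intro k l hne
  calc (O * A 0 * R) k l
      = (loewnerOA A C μ ql k * (Phi (A 0) (μ k) * A 0 * Phi (A 0) (lam l)) *
          loewnerAR A B lam qr l) 0 0 := by
        rw [Matrix.mul_mul_apply_of_rows_of_cols hO hR]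
        simp only [Matrix.mul_assoc]
    _ = _ := by
        rw [Phi_mul_mul_Phi (hμ k k.is_le) (hlam l l.is_le) hne]
        simp only [Matrix.mul_smul, Matrix.smul_mul, Matrix.mul_sub, Matrix.sub_mul,
          Matrix.smul_apply, Matrix.sub_apply, smul_eq_mul]
        field_simp
        ring
end

section
/- Suppose Ê = O·R is invertible, and define the reduced model Ã₀ = Ê⁻¹(O·A₀·R), B̃ = Ê⁻¹(O·B). Then (λ₀·Ê - O·A₀·R)·e₁ = O·B, where e₁ is the first standard basis vector; consequently (λ₀·I - Ã₀)·e₁ = B̃, i.e., Φ̃(λ₀)·B̃ = e₁ where Φ̃(s) = (sI - Ã₀)⁻¹, provided λ₀I - Ã₀ is invertible. -/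
open Matrix

theorem stmt_10 {n np N : ℕ} (A : Fin (np + 1) → Matrix (Fin n) (Fin n) ℂ)
    (C : Matrix (Fin 1) (Fin n) ℂ) (B : Matrix (Fin n) (Fin 1) ℂ)
    (μ lam : ℕ → ℂ) (ql qr : ℕ → Fin np)
    (hμ : ∀ k ≤ N, IsUnit (μ k • (1 : Matrix (Fin n) (Fin n) ℂ) - A 0))
    (hlam : ∀ l ≤ N, IsUnit (lam l • (1 : Matrix (Fin n) (Fin n) ℂ) - A 0))
    (O : Matrix (Fin (N + 1)) (Fin n) ℂ) (R : Matrix (Fin n) (Fin (N + 1)) ℂ)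
    (hO : ∀ (k : Fin (N + 1)) (j : Fin n),
      O k j = (loewnerOA A C μ ql k * Phi (A 0) (μ k)) 0 j)
    (hR : ∀ (j : Fin n) (l : Fin (N + 1)),
      R j l = (Phi (A 0) (lam l) * loewnerAR A B lam qr l) j 0)
    (hne : ∀ k ≤ N, μ k ≠ lam 0)
    (hE : IsUnit (O * R))
    (e₁ : Matrix (Fin (N + 1)) (Fin 1) ℂ)
    (he₁ : ∀ i j, e₁ i j = if i = 0 then 1 else 0)
    (hA₀red : IsUnit (lam 0 • (1 : Matrix (Fin (N + 1)) (Fin (N + 1)) ℂ) -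
      (O * R)⁻¹ * (O * A 0 * R))) :
    (lam 0 • (O * R) - O * A 0 * R) * e₁ = O * B ∧
    (lam 0 • (1 : Matrix (Fin (N + 1)) (Fin (N + 1)) ℂ) -
        (O * R)⁻¹ * (O * A 0 * R)) * e₁ = (O * R)⁻¹ * (O * B) ∧
    (lam 0 • (1 : Matrix (Fin (N + 1)) (Fin (N + 1)) ℂ) -
        (O * R)⁻¹ * (O * A 0 * R))⁻¹ * ((O * R)⁻¹ * (O * B)) = e₁ := by

  set M := lam 0 • (1 : Matrix (Fin n) (Fin n) ℂ) - A 0 with hMdef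
  have hM : IsUnit M := hlam 0 (Nat.zero_le N)
  have hMdet : IsUnit M.det := (Matrix.isUnit_iff_isUnit_det M).mp hM
  have hRe : R * e₁ = Phi (A 0) (lam 0) * B := by
    ext j j1
    have : (R * e₁) j j1 = R j 0 := by
      simp [Matrix.mul_apply, he₁, mul_ite]
    have hj1 : j1 = 0 := Subsingleton.elim _ _
    subst hj1
    rw [this, hR j 0]
    rfl
  have key : M * (R * e₁) = B := by
    rw [hRe, Phi, ← hMdef, ← Matrix.mul_assoc, Matrix.mul_nonsing_inv M hMdet, Matrix.one_mul]
  have expand : lam 0 • (O * R) - O * A 0 * R = O * M * R := by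
    simp [hMdef, Matrix.mul_sub, Matrix.sub_mul, mul_smul_comm, smul_mul_assoc,
      Matrix.mul_assoc]
  have h1 : (lam 0 • (O * R) - O * A 0 * R) * e₁ = O * B := by
    rw [expand, Matrix.mul_assoc, Matrix.mul_assoc, key]
  have hEdet : IsUnit (O * R).det := (Matrix.isUnit_iff_isUnit_det _).mp hE
  have h2 : (lam 0 • (1 : Matrix (Fin (N + 1)) (Fin (N + 1)) ℂ) -
      (O * R)⁻¹ * (O * A 0 * R)) * e₁ = (O * R)⁻¹ * (O * B) := by
    have hfac : (O * R)⁻¹ * (lam 0 • (O * R) - O * A 0 * R) =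
        lam 0 • (1 : Matrix (Fin (N + 1)) (Fin (N + 1)) ℂ) - (O * R)⁻¹ * (O * A 0 * R) := by
      rw [Matrix.mul_sub, Matrix.mul_smul, Matrix.nonsing_inv_mul _ hEdet]
    rw [← hfac, Matrix.mul_assoc, h1]
  refine ⟨h1, h2, ?_⟩
  have hredDet : IsUnit (lam 0 • (1 : Matrix (Fin (N + 1)) (Fin (N + 1)) ℂ) -
      (O * R)⁻¹ * (O * A 0 * R)).det := (Matrix.isUnit_iff_isUnit_det _).mp hA₀red
  rw [← h2, ← Matrix.mul_assoc, Matrix.nonsing_inv_mul _ hredDet, Matrix.one_mul]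
end

section
/- Suppose Ê = O·R is invertible and λ₀I - Ã₀ is invertible, where Ã₀ = Ê⁻¹(O A₀ R). Then the reduced transfer function H̃₀(λ₀) := C̃ Φ̃(λ₀) B̃ with C̃ = C·R, B̃ = Ê⁻¹ O B, Φ̃(s) = (sI - Ã₀)⁻¹, equals the original transfer function H₀(λ₀) = C Φ(λ₀) B, i.e., the reduced model interpolates H₀ at s = λ₀. -/
open Matrix

theorem stmt_11 {n np N : ℕ} (A : Fin (np + 1) → Matrix (Fin n) (Fin n) ℂ)
    (C : Matrix (Fin 1) (Fin n) ℂ) (B : Matrix (Fin n) (Fin 1) ℂ)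
    (μ lam : ℕ → ℂ) (ql qr : ℕ → Fin np)
    (hμ : ∀ k ≤ N, IsUnit (μ k • (1 : Matrix (Fin n) (Fin n) ℂ) - A 0))
    (hlam : ∀ l ≤ N, IsUnit (lam l • (1 : Matrix (Fin n) (Fin n) ℂ) - A 0))
    (O : Matrix (Fin (N + 1)) (Fin n) ℂ) (R : Matrix (Fin n) (Fin (N + 1)) ℂ)
    (hO : ∀ (k : Fin (N + 1)) (j : Fin n),
      O k j = (loewnerOA A C μ ql k * Phi (A 0) (μ k)) 0 j)
    (hR : ∀ (j : Fin n) (l : Fin (N + 1)),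
      R j l = (Phi (A 0) (lam l) * loewnerAR A B lam qr l) j 0)
    (hne : ∀ k ≤ N, μ k ≠ lam 0)
    (hE : IsUnit (O * R))
    (hA₀red : IsUnit (lam 0 • (1 : Matrix (Fin (N + 1)) (Fin (N + 1)) ℂ) -
      (O * R)⁻¹ * (O * A 0 * R))) :
    (C * R *
      (lam 0 • (1 : Matrix (Fin (N + 1)) (Fin (N + 1)) ℂ) -
        (O * R)⁻¹ * (O * A 0 * R))⁻¹ * ((O * R)⁻¹ * (O * B))) 0 0 =
    (C * Phi (A 0) (lam 0) * B) 0 0 := by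
  have hlam0 := hlam 0 (Nat.zero_le N)
  have hdet : IsUnit (lam 0 • (1 : Matrix (Fin n) (Fin n) ℂ) - A 0).det :=
    (Matrix.isUnit_iff_isUnit_det _).mp hlam0
  have hEdet : IsUnit (O * R).det := (Matrix.isUnit_iff_isUnit_det _).mp hE
  have hAdet : IsUnit (lam 0 • (1 : Matrix (Fin (N + 1)) (Fin (N + 1)) ℂ) -
      (O * R)⁻¹ * (O * A 0 * R)).det := (Matrix.isUnit_iff_isUnit_det _).mp hA₀red
  set X := lam 0 • (1 : Matrix (Fin (N + 1)) (Fin (N + 1)) ℂ) - (O * R)⁻¹ * (O * A 0 * R)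
    with hX
  set E0 : Matrix (Fin (N + 1)) (Fin 1) ℂ := Matrix.of fun i _ => if i = 0 then 1 else 0
    with hE0def
  have hRE0 : R * E0 = Phi (A 0) (lam 0) * B := by
    ext j k
    have h0 : R j 0 = (Phi (A 0) (lam 0) * B) j 0 := by
      have := hR j 0
      simpa [loewnerAR] using this
    fin_cases k
    simp [Matrix.mul_apply, hE0def, mul_ite, mul_one, mul_zero, h0]
  have hΦ : (lam 0 • (1 : Matrix (Fin n) (Fin n) ℂ) - A 0) * Phi (A 0) (lam 0) = 1 :=
    Matrix.mul_nonsing_inv _ hdet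
  have key : (O * R) * (X * E0) = O * B := by
    have h1 : (O * R) * ((O * R)⁻¹ * (O * A 0 * R)) = O * A 0 * R := by
      rw [← Matrix.mul_assoc, Matrix.mul_nonsing_inv _ hEdet, Matrix.one_mul]
    rw [← Matrix.mul_assoc, hX, Matrix.mul_sub, Matrix.mul_smul, Matrix.mul_one, h1]
    have : lam 0 • (O * R) - O * A 0 * R
        = O * (lam 0 • (1 : Matrix (Fin n) (Fin n) ℂ) - A 0) * R := by
      rw [Matrix.mul_sub, Matrix.mul_smul, Matrix.mul_one, Matrix.sub_mul,
        Matrix.smul_mul]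
    rw [this, Matrix.mul_assoc, Matrix.mul_assoc, hRE0, ← Matrix.mul_assoc
      (lam 0 • (1 : Matrix (Fin n) (Fin n) ℂ) - A 0), hΦ, Matrix.one_mul]
  have h2 : X * E0 = (O * R)⁻¹ * (O * B) := by
    rw [← key, ← Matrix.mul_assoc, Matrix.nonsing_inv_mul _ hEdet, Matrix.one_mul]
  have h3 : X⁻¹ * ((O * R)⁻¹ * (O * B)) = E0 := by
    rw [← h2, ← Matrix.mul_assoc, Matrix.nonsing_inv_mul _ hAdet, Matrix.one_mul]
  rw [Matrix.mul_assoc (C * R), h3, Matrix.mul_assoc, hRE0, ← Matrix.mul_assoc]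
end
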